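/- If e > n/k − 1 (equivalently ke + k > n), then the orbit sum [a_1⋯a_k b_1^e⋯b_k^e] is decomposable in L_n = (Λ_{F_2}(a_1,...,a_n) ⊗ F_2[b_1,...,b_n])^{Σ_n}, i.e., it lies in the square of the augmentation ideal. -/

import Mathlib

/-!
The type `(c, c₀)` of a monomial of `K_n` built from factors `b_i` and `a_i b_i^d` records the
number `c d` of its factors `a_i b_i^d` and the number `c₀` of its factors `b_i`; the sum of all
monomials of one type is an orbit sum. If `c` lives in degrees below `d₁`, the product of the
sums of the types `(single d₁ c₁, 0)` and `(c, c₀)` is the sum over `t` of the types in which `t`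
of the factors `a_i b_i^{d₁}` absorbed a factor `b_i`, since factors meeting an `a_i` die as
`a_i² = 0`. Its term `t = 0` shows, by induction on `c₀`, that a type with two distinct
`a`-degrees is decomposable; for `c = 0` its extreme terms show that the types
`(single (d + 1) k, m)` and `(single d k, m + k)` are decomposable together. Descending from
`[a_1 b_1^e ⋯ a_k b_k^e]`, of type `(single e k, 0)`, ends at the type `(single 0 k, ek)`, which
no monomial has when `k + ek > n`.
-/
open MvPolynomial

/-- The ideal generated by the squares of the `a`-variables (indexed by `Sum.inl`); the
quotient is `K_n = Λ_{F₂}(a_1,…,a_n) ⊗ F₂[b_1,…,b_n]` (char 2), with the `b`-variables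
indexed by `Sum.inr`. -/
noncomputable def sqIdealK (n : ℕ) : Ideal (MvPolynomial (Fin n ⊕ Fin n) (ZMod 2)) :=
  Ideal.span (Set.range fun i : Fin n =>
    (X (Sum.inl i) : MvPolynomial (Fin n ⊕ Fin n) (ZMod 2)) ^ 2)

/-- `K_n = Λ_{F₂}(a_1,…,a_n) ⊗ F₂[b_1,…,b_n]`. -/
noncomputable abbrev Kn (n : ℕ) : Type :=
  MvPolynomial (Fin n ⊕ Fin n) (ZMod 2) ⧸ sqIdealK n

/-- The action of `g ∈ Σ_n` on `K_n`, permuting the `a`'s and `b`'s simultaneously. -/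
noncomputable def permActK (n : ℕ) (g : Equiv.Perm (Fin n)) : Kn n →ₐ[ZMod 2] Kn n :=
  Ideal.Quotient.liftₐ (sqIdealK n)
    ((Ideal.Quotient.mkₐ (ZMod 2) (sqIdealK n)).comp
      (rename (Sum.map g g) : _ →ₐ[ZMod 2] _))
    (by
      intro a ha
      refine Submodule.span_induction ?_ ?_ ?_ ?_ ha
      · rintro _ ⟨i, rfl⟩
        rw [AlgHom.comp_apply, map_pow, rename_X, Ideal.Quotient.mkₐ_eq_mk,
          Ideal.Quotient.eq_zero_iff_mem]
        exact Ideal.subset_span ⟨g i, rfl⟩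
      · exact map_zero _
      · intro x y _ _ hx hy; rw [map_add, hx, hy, add_zero]
      · intro c x _ hx; rw [smul_eq_mul, map_mul, hx, mul_zero])

/-- `L_n = K_n^{Σ_n}`, the subalgebra of invariants. -/
noncomputable def Ln (n : ℕ) : Subalgebra (ZMod 2) (Kn n) where
  carrier := {x | ∀ g : Equiv.Perm (Fin n), permActK n g x = x}
  add_mem' := fun hx hy => by intro g; rw [map_add, hx g, hy g]
  mul_mem' := fun hx hy => by intro g; rw [map_mul, hx g, hy g]
  algebraMap_mem' := fun r g => (permActK n g).commutes r

/-- The orbit sum `[m]` of a monomial (given by its exponent vector `μ`): the sum over the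
`Σ_n`-orbit of `m`, each distinct monomial appearing exactly once. -/
noncomputable def orbitSum (n : ℕ) (μ : (Fin n ⊕ Fin n) →₀ ℕ) : Kn n :=
  Ideal.Quotient.mk (sqIdealK n)
    (∑ ν ∈ Finset.image
        (fun g : Equiv.Perm (Fin n) => Finsupp.equivMapDomain (Equiv.sumCongr g g) μ)
        Finset.univ,
      monomial ν (1 : ZMod 2))

/-- The augmentation `K_n → F₂` sending all variables to zero. -/
noncomputable def augK (n : ℕ) : Kn n →ₐ[ZMod 2] ZMod 2 :=
  Ideal.Quotient.liftₐ (sqIdealK n) (aeval 0)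
    (by
      intro a ha
      refine Submodule.span_induction ?_ ?_ ?_ ?_ ha
      · rintro _ ⟨i, rfl⟩
        simp
      · exact map_zero _
      · intro x y _ _ hx hy; rw [map_add, hx, hy, add_zero]
      · intro c x _ hx; rw [smul_eq_mul, map_mul, hx, mul_zero])

/-- The augmentation ideal `I ⊆ L_n`. -/
noncomputable def augIdealL (n : ℕ) : Ideal (Ln n) :=
  RingHom.ker (((augK n).comp (Ln n).val : Ln n →ₐ[ZMod 2] ZMod 2) : Ln n →+* ZMod 2)

/-- The exponent vector of the monomial `a_1⋯a_k b_1^e⋯b_k^e`. -/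
noncomputable def headMonomial (n k e : ℕ) : (Fin n ⊕ Fin n) →₀ ℕ :=
  Finsupp.equivFunOnFinite.symm (Sum.elim
    (fun i : Fin n => if (i : ℕ) < k then 1 else 0)
    (fun i : Fin n => if (i : ℕ) < k then e else 0))


open Finset

lemma Finsupp.one_lt_card_support {α M : Type*} [Zero M] {f : α →₀ M} {a b : α} (hab : a ≠ b)
    (ha : f a ≠ 0) (hb : f b ≠ 0) : 1 < #f.support :=
  one_lt_card.mpr ⟨a, Finsupp.mem_support_iff.mpr ha, b, Finsupp.mem_support_iff.mpr hb, hab⟩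

section RoleFunctions

variable {n : ℕ}

/-- A role function `ρ : Fin n → ℕ` describes the monomial `∏ i, roleFactor i (ρ i)` of `K_n`:
role `0` is the factor `1`, role `1` the factor `b_i`, and role `d + 2` the factor `a_i b_i^d`. -/
noncomputable def roleFactor (i : Fin n) : ℕ → MvPolynomial (Fin n ⊕ Fin n) (ZMod 2)
  | 0 => 1
  | 1 => X (Sum.inr i)
  | d + 2 => X (Sum.inl i) * X (Sum.inr i) ^ d

noncomputable def roleMonomial (ρ : Fin n → ℕ) : MvPolynomial (Fin n ⊕ Fin n) (ZMod 2) :=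
  ∏ i, roleFactor i (ρ i)

def roleCount (v : ℕ) (ρ : Fin n → ℕ) : ℕ :=
  #{i | ρ i = v}

/-- `c d` is the number of factors `a_i b_i^d` and `c₀` the number of factors `b_i`. -/
def IsOfType (c : ℕ →₀ ℕ) (c₀ : ℕ) (ρ : Fin n → ℕ) : Prop :=
  (∀ d, roleCount (d + 2) ρ = c d) ∧ roleCount 1 ρ = c₀

lemma roleCount_congr {ρ σ : Fin n → ℕ} {v w : ℕ} (h : ∀ i, ρ i = v ↔ σ i = w) :
    roleCount v ρ = roleCount w σ := by
  simp only [roleCount, h]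

lemma roleCount_eq_card {ρ : Fin n → ℕ} {v : ℕ} {p : Fin n → Prop} [DecidablePred p]
    (h : ∀ i, ρ i = v ↔ p i) : roleCount v ρ = #{i | p i} := by
  simp only [roleCount, h]

lemma roleCount_eq_zero {ρ : Fin n → ℕ} {v : ℕ} (h : ∀ i, ρ i ≠ v) : roleCount v ρ = 0 := by
  simp [roleCount, h]

lemma roleCount_eq_add {ρ σ : Fin n → ℕ} {v w₁ w₂ : ℕ} (hw : w₁ ≠ w₂)
    (h : ∀ i, ρ i = v ↔ σ i = w₁ ∨ σ i = w₂) :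
    roleCount v ρ = roleCount w₁ σ + roleCount w₂ σ := by
  rw [roleCount, roleCount, roleCount, ← card_union_of_disjoint, ← filter_or]
  · simp only [h]
  · exact disjoint_filter.mpr fun i _ h₁ h₂ => hw (h₁.symm.trans h₂)

lemma roleCount_add_roleCount_le (ρ : Fin n → ℕ) {v w : ℕ} (h : v ≠ w) :
    roleCount v ρ + roleCount w ρ ≤ n := by
  rw [roleCount, roleCount, ← card_union_of_disjoint]
  · exact (card_le_univ _).trans_eq (Fintype.card_fin n)
  · exact disjoint_filter.mpr fun i _ h₁ h₂ => h (h₁.symm.trans h₂)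

lemma roleCount_ne_zero_of_apply_eq {ρ : Fin n → ℕ} {v : ℕ} {i : Fin n} (hi : ρ i = v) :
    roleCount v ρ ≠ 0 :=
  card_ne_zero_of_mem (mem_filter.mpr ⟨mem_univ i, hi⟩)

lemma exists_apply_eq_of_roleCount_ne_zero {ρ : Fin n → ℕ} {v : ℕ} (h : roleCount v ρ ≠ 0) :
    ∃ i, ρ i = v := by
  obtain ⟨i, hi⟩ := card_ne_zero.mp h
  exact ⟨i, (mem_filter.mp hi).2⟩

lemma roleCount_comp_perm (v : ℕ) (ρ : Fin n → ℕ) (g : Equiv.Perm (Fin n)) :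
    roleCount v (ρ ∘ g) = roleCount v ρ :=
  card_equiv g (by simp)

lemma exists_perm_comp_eq_of_roleCount_eq {ρ σ : Fin n → ℕ}
    (h : ∀ v, roleCount v ρ = roleCount v σ) :
    ∃ g : Equiv.Perm (Fin n), σ ∘ g = ρ := by
  have fiber (v : ℕ) : {i // ρ i = v} ≃ {i // σ i = v} :=
    Fintype.equivOfCardEq (by simpa only [Fintype.card_subtype, roleCount] using h v)
  exact ⟨Equiv.ofFiberEquiv fiber, funext (Equiv.ofFiberEquiv_map fiber)⟩

namespace IsOfType

variable {c : ℕ →₀ ℕ} {c₀ : ℕ} {ρ : Fin n → ℕ}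

lemma comp_perm (h : IsOfType c c₀ ρ) (g : Equiv.Perm (Fin n)) : IsOfType c c₀ (ρ ∘ g) :=
  ⟨fun d => (roleCount_comp_perm _ ρ g).trans (h.1 d), (roleCount_comp_perm 1 ρ g).trans h.2⟩

lemma apply_ne_zero {i : Fin n} {d : ℕ} (h : IsOfType c c₀ ρ) (hi : ρ i = d + 2) : c d ≠ 0 := by
  rw [← h.1 d]
  exact roleCount_ne_zero_of_apply_eq hi

lemma apply_lt {d₁ : ℕ} (h : IsOfType c c₀ ρ) (hc : ∀ d ∈ c.support, d < d₁) (i : Fin n) :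
    ρ i < d₁ + 2 := by
  by_contra hlt
  have := hc (ρ i - 2) (Finsupp.mem_support_iff.mpr (h.apply_ne_zero (i := i) (by omega)))
  omega

lemma apply_eq_zero_or_eq {d₁ c₁ : ℕ} (h : IsOfType (Finsupp.single d₁ c₁) 0 ρ) (i : Fin n) :
    ρ i = 0 ∨ ρ i = d₁ + 2 := by
  rcases hρ : ρ i with _ | _ | d
  · exact Or.inl rfl
  · exact absurd h.2 (roleCount_ne_zero_of_apply_eq hρ)
  · have := h.apply_ne_zero hρ
    rw [Finsupp.single_apply] at this
    split_ifs at this with hd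
    · exact Or.inr (by rw [hd])
    · exact absurd rfl this

end IsOfType

open Classical in
/-- The roles of a function of type `(c, c₀)` are at most `max c.support + 2`. -/
noncomputable def rolesOfType (n : ℕ) (c : ℕ →₀ ℕ) (c₀ : ℕ) : Finset (Fin n → ℕ) :=
  {ρ ∈ Fintype.piFinset fun _ => range (c.support.sup id + 3) | IsOfType c c₀ ρ}

lemma mem_rolesOfType {c : ℕ →₀ ℕ} {c₀ : ℕ} {ρ : Fin n → ℕ} :
    ρ ∈ rolesOfType n c c₀ ↔ IsOfType c c₀ ρ := by
  classical
  refine ⟨fun h => (mem_filter.mp h).2, fun h => mem_filter.mpr ⟨?_, h⟩⟩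
  refine Fintype.mem_piFinset.mpr fun i => mem_range.mpr ?_
  exact h.apply_lt (fun d hd => Nat.lt_succ_of_le (le_sup (f := id) hd)) i

end RoleFunctions

section TypeSums

variable {n : ℕ}

lemma permActK_mk (g : Equiv.Perm (Fin n)) (p : MvPolynomial (Fin n ⊕ Fin n) (ZMod 2)) :
    permActK n g (Ideal.Quotient.mk (sqIdealK n) p) =
      Ideal.Quotient.mk (sqIdealK n) (rename (Sum.map g g) p) :=
  rfl

lemma augK_mk (p : MvPolynomial (Fin n ⊕ Fin n) (ZMod 2)) :
    augK n (Ideal.Quotient.mk (sqIdealK n) p) = aeval 0 p :=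
  rfl

lemma rename_roleMonomial (g : Equiv.Perm (Fin n)) (ρ : Fin n → ℕ) :
    rename (Sum.map g g) (roleMonomial ρ) = roleMonomial (ρ ∘ g.symm) := by
  have factor (i : Fin n) (r : ℕ) :
      rename (Sum.map g g) (roleFactor i r) = roleFactor (g i) r := by
    rcases r with _ | _ | d <;> simp [roleFactor]
  rw [roleMonomial, roleMonomial, map_prod,
    ← Equiv.prod_comp g fun j => roleFactor j ((ρ ∘ g.symm) j)]
  simp [factor]

lemma aeval_zero_roleMonomial_of_ne_zero {ρ : Fin n → ℕ} {i : Fin n} (hi : ρ i ≠ 0) :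
    aeval (0 : Fin n ⊕ Fin n → ZMod 2) (roleMonomial ρ) = 0 := by
  rw [roleMonomial, map_prod]
  refine prod_eq_zero (mem_univ i) ?_
  rcases hρ : ρ i with _ | _ | d
  · exact absurd hρ hi
  · simp [roleFactor]
  · simp [roleFactor]

/-- The orbit sum `[m]` of any monomial `m` of type `(c, c₀)`. -/
noncomputable def typeSum (n : ℕ) (c : ℕ →₀ ℕ) (c₀ : ℕ) : Ln n where
  val := Ideal.Quotient.mk (sqIdealK n) (∑ ρ ∈ rolesOfType n c c₀, roleMonomial ρ)
  property g := by
    rw [permActK_mk, map_sum]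
    congr 1
    refine sum_nbij' (· ∘ g.symm) (· ∘ g) (fun ρ hρ => ?_) (fun ρ hρ => ?_)
      (fun ρ _ => ?_) (fun ρ _ => ?_) (fun ρ _ => rename_roleMonomial g ρ)
    · exact mem_rolesOfType.mpr ((mem_rolesOfType.mp hρ).comp_perm g.symm)
    · exact mem_rolesOfType.mpr ((mem_rolesOfType.mp hρ).comp_perm g)
    · ext; simp
    · ext; simp

lemma coe_typeSum (c : ℕ →₀ ℕ) (c₀ : ℕ) :
    (typeSum n c c₀ : Kn n) =
      Ideal.Quotient.mk (sqIdealK n) (∑ ρ ∈ rolesOfType n c c₀, roleMonomial ρ) :=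
  rfl

lemma typeSum_mem_augIdealL {c : ℕ →₀ ℕ} {c₀ : ℕ} (h : c ≠ 0 ∨ c₀ ≠ 0) :
    typeSum n c c₀ ∈ augIdealL n := by
  rw [augIdealL, RingHom.mem_ker]
  change augK n (typeSum n c c₀ : Kn n) = 0
  rw [coe_typeSum, augK_mk, map_sum]
  refine sum_eq_zero fun ρ hρ => ?_
  have hρ := mem_rolesOfType.mp hρ
  obtain ⟨i, hi⟩ : ∃ i, ρ i ≠ 0 := by
    rcases h with h | h
    · obtain ⟨d, hd⟩ := Finsupp.ne_iff.mp h
      obtain ⟨i, hi⟩ := exists_apply_eq_of_roleCount_ne_zero (v := d + 2) (by rw [hρ.1 d]; exact hd)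
      exact ⟨i, by omega⟩
    · obtain ⟨i, hi⟩ := exists_apply_eq_of_roleCount_ne_zero (v := 1) (by rw [hρ.2]; exact h)
      exact ⟨i, by omega⟩
  exact aeval_zero_roleMonomial_of_ne_zero hi

/-- There are only `n` indices to carry the `m + c₀` nontrivial factors. -/
lemma typeSum_single_eq_zero {d m c₀ : ℕ} (h : n < m + c₀) :
    typeSum n (Finsupp.single d m) c₀ = 0 := by
  suffices rolesOfType n (Finsupp.single d m) c₀ = ∅ by
    ext1; rw [coe_typeSum, this, sum_empty, map_zero]; rfl
  refine eq_empty_of_forall_notMem fun ρ hρ => ?_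
  have hρ := mem_rolesOfType.mp hρ
  have := roleCount_add_roleCount_le ρ (show d + 2 ≠ 1 by omega)
  rw [hρ.1 d, hρ.2, Finsupp.single_eq_same] at this
  omega

end TypeSums

section ProductFormula

variable {n d₁ : ℕ}

lemma add_single_add_single_apply {c : ℕ →₀ ℕ} (hc : ∀ d ∈ c.support, d < d₁) (t m d : ℕ) :
    (c + Finsupp.single (d₁ + 1) t + Finsupp.single d₁ m) d =
      if d = d₁ + 1 then t else if d = d₁ then m else c d := by
  have h₀ : c d₁ = 0 := Finsupp.notMem_support_iff.mp fun h => (hc _ h).false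
  have h₁ : c (d₁ + 1) = 0 := Finsupp.notMem_support_iff.mp fun h => by have := hc _ h; omega
  simp only [Finsupp.add_apply, Finsupp.single_apply]
  split_ifs <;> subst_vars <;> omega

lemma mem_support_add_single_add_single {c : ℕ →₀ ℕ} (hc : ∀ d ∈ c.support, d < d₁)
    {t m d : ℕ} (hd : d ∈ (c + Finsupp.single (d₁ + 1) t + Finsupp.single d₁ m).support) :
    d < d₁ + 2 := by
  rw [Finsupp.mem_support_iff, add_single_add_single_apply hc] at hd
  split_ifs at hd with h₁ h₂
  · omega
  · omega
  · exact (hc d (Finsupp.mem_support_iff.mpr hd)).trans (by omega)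

def Splits (d₁ : ℕ) (ρ₁ ρ₂ : Fin n → ℕ) : Prop :=
  ∀ i, (ρ₁ i = 0 ∧ ρ₂ i < d₁ + 2) ∨ (ρ₁ i = d₁ + 2 ∧ ρ₂ i ≤ 1)

def splitOff (D : ℕ) (σ : Fin n → ℕ) : Fin n → ℕ :=
  fun i => if D ≤ σ i then D else 0

lemma splitOff_add_sub (D : ℕ) (σ : Fin n → ℕ) : splitOff D σ + (σ - splitOff D σ) = σ := by
  ext i
  simp only [splitOff, Pi.add_apply, Pi.sub_apply]
  split_ifs <;> omega

lemma splits_splitOff_of_lt {σ : Fin n → ℕ} (hσ : ∀ i, σ i < d₁ + 4) :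
    Splits d₁ (splitOff (d₁ + 2) σ) (σ - splitOff (d₁ + 2) σ) := by
  intro i
  have := hσ i
  simp only [splitOff, Pi.sub_apply]
  split_ifs <;> omega

lemma mk_roleMonomial_mul_eq_zero {ρ₁ ρ₂ : Fin n → ℕ} (i : Fin n) (h₁ : 2 ≤ ρ₁ i)
    (h₂ : 2 ≤ ρ₂ i) :
    Ideal.Quotient.mk (sqIdealK n) (roleMonomial ρ₁ * roleMonomial ρ₂) = 0 := by
  obtain ⟨p, hp⟩ := Nat.exists_eq_add_of_le' h₁
  obtain ⟨q, hq⟩ := Nat.exists_eq_add_of_le' h₂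
  rw [Ideal.Quotient.eq_zero_iff_mem, roleMonomial, roleMonomial, ← prod_mul_distrib,
    ← mul_prod_erase _ _ (mem_univ i), hp, hq]
  have : roleFactor i (p + 2) * roleFactor i (q + 2) =
      X (Sum.inl i) ^ 2 * X (Sum.inr i) ^ (p + q) := by
    simp only [roleFactor]
    ring
  rw [this, mul_assoc]
  exact Ideal.mul_mem_right _ _ (Ideal.subset_span ⟨i, rfl⟩)

namespace Splits

variable {ρ₁ ρ₂ : Fin n → ℕ}

lemma splitOff_add (h : Splits d₁ ρ₁ ρ₂) : splitOff (d₁ + 2) (ρ₁ + ρ₂) = ρ₁ := by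
  ext i
  have := h i
  simp only [splitOff, Pi.add_apply]
  split_ifs <;> omega

lemma roleMonomial_mul (h : Splits d₁ ρ₁ ρ₂) :
    roleMonomial ρ₁ * roleMonomial ρ₂ = roleMonomial (ρ₁ + ρ₂) := by
  rw [roleMonomial, roleMonomial, roleMonomial, ← prod_mul_distrib]
  refine prod_congr rfl fun i _ => ?_
  rcases h i with ⟨h₁, -⟩ | ⟨h₁, h₂⟩
  · simp [h₁, roleFactor]
  · obtain h₂ | h₂ : ρ₂ i = 0 ∨ ρ₂ i = 1 := by omega
    · simp [h₁, h₂, roleFactor]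
    · simp [h₁, h₂, roleFactor, pow_succ, mul_assoc]

lemma roleCount_left (h : Splits d₁ ρ₁ ρ₂) :
    roleCount (d₁ + 2) ρ₁ = roleCount (d₁ + 2) (ρ₁ + ρ₂) + roleCount (d₁ + 3) (ρ₁ + ρ₂) :=
  roleCount_eq_add (by omega) fun i => by have := h i; rw [Pi.add_apply]; omega

lemma roleCount_one_right (h : Splits d₁ ρ₁ ρ₂) :
    roleCount 1 ρ₂ = roleCount 1 (ρ₁ + ρ₂) + roleCount (d₁ + 3) (ρ₁ + ρ₂) :=
  roleCount_eq_add (by omega) fun i => by have := h i; rw [Pi.add_apply]; omega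

lemma roleCount_right {d : ℕ} (h : Splits d₁ ρ₁ ρ₂) (hd : d ≠ d₁) (hd' : d ≠ d₁ + 1) :
    roleCount (d + 2) ρ₂ = roleCount (d + 2) (ρ₁ + ρ₂) :=
  roleCount_congr fun i => by have := h i; rw [Pi.add_apply]; omega

lemma isOfType_iff {c : ℕ →₀ ℕ} {c₀ c₁ t : ℕ} (hc : ∀ d ∈ c.support, d < d₁)
    (h : Splits d₁ ρ₁ ρ₂) :
    (IsOfType (Finsupp.single d₁ c₁) 0 ρ₁ ∧ IsOfType c c₀ ρ₂ ∧
        roleCount (d₁ + 3) (ρ₁ + ρ₂) = t) ↔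
      t ≤ min c₁ c₀ ∧
        IsOfType (c + Finsupp.single (d₁ + 1) t + Finsupp.single d₁ (c₁ - t)) (c₀ - t)
          (ρ₁ + ρ₂) := by
  have top₁ := h.roleCount_left
  have one₂ := h.roleCount_one_right
  simp only [IsOfType, add_single_add_single_apply hc]
  constructor
  · rintro ⟨⟨h₁, -⟩, ⟨h₂, h₂'⟩, rfl⟩
    have := h₁ d₁
    rw [Finsupp.single_eq_same] at this
    refine ⟨by omega, fun d => ?_, by omega⟩
    split_ifs with hd hd'
    · rw [hd]
    · subst hd'; omega
    · rw [← h.roleCount_right hd' hd, h₂]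
  · rintro ⟨ht, hσ, hσ₁⟩
    have hd₁ := hσ d₁
    have hd₁' : roleCount (d₁ + 3) (ρ₁ + ρ₂) = _ := hσ (d₁ + 1)
    rw [if_neg (by omega), if_pos rfl] at hd₁
    rw [if_pos rfl] at hd₁'
    refine ⟨⟨fun d => ?_, roleCount_eq_zero fun i => by have := h i; omega⟩,
      ⟨fun d => ?_, by omega⟩, hd₁'⟩
    · rw [Finsupp.single_apply]
      split_ifs with hd
      · subst hd; omega
      · exact roleCount_eq_zero fun i => by have := h i; omega
    · by_cases hd : d₁ ≤ d
      · rw [roleCount_eq_zero fun i => by have := h i; omega]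
        exact (Finsupp.notMem_support_iff.mp fun h => by have := hc _ h; omega).symm
      · have := hσ d
        rw [if_neg (by omega), if_neg (by omega)] at this
        rw [h.roleCount_right (by omega) (by omega), this]

end Splits

lemma IsOfType.splits {c : ℕ →₀ ℕ} {c₀ c₁ : ℕ} {ρ₁ ρ₂ : Fin n → ℕ}
    (h₁ : IsOfType (Finsupp.single d₁ c₁) 0 ρ₁) (h₂ : IsOfType c c₀ ρ₂)
    (hc : ∀ d ∈ c.support, d < d₁) (hdisj : ∀ i, ρ₁ i < 2 ∨ ρ₂ i < 2) : Splits d₁ ρ₁ ρ₂ := by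
  intro i
  have := h₁.apply_eq_zero_or_eq i
  have := h₂.apply_lt hc i
  have := hdisj i
  omega

lemma IsOfType.splits_splitOff {c : ℕ →₀ ℕ} {c₀ t m : ℕ} {σ : Fin n → ℕ}
    (hc : ∀ d ∈ c.support, d < d₁)
    (h : IsOfType (c + Finsupp.single (d₁ + 1) t + Finsupp.single d₁ m) c₀ σ) :
    Splits d₁ (splitOff (d₁ + 2) σ) (σ - splitOff (d₁ + 2) σ) :=
  splits_splitOff_of_lt fun i =>
    h.apply_lt (d₁ := d₁ + 2) (fun _ hd => mem_support_add_single_add_single hc hd) i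


lemma IsOfType.isOfType_splitOff {c : ℕ →₀ ℕ} {c₀ c₁ t : ℕ} {σ : Fin n → ℕ}
    (hc : ∀ d ∈ c.support, d < d₁) (ht : t ≤ min c₁ c₀)
    (h : IsOfType (c + Finsupp.single (d₁ + 1) t + Finsupp.single d₁ (c₁ - t)) (c₀ - t) σ) :
    IsOfType (Finsupp.single d₁ c₁) 0 (splitOff (d₁ + 2) σ) ∧
      IsOfType c c₀ (σ - splitOff (d₁ + 2) σ) ∧ roleCount (d₁ + 3) σ = t := by
  have := (h.splits_splitOff hc).isOfType_iff hc |>.mpr ⟨ht, by rwa [splitOff_add_sub]⟩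
  rwa [splitOff_add_sub] at this

/-- Each factor `a_i b_i^{d₁}` of a monomial on the left meets a factor `1`, `b_i` (this happens
for `t` of them) or `a_i b_i^d` of a monomial on the right; the last case gives `0` as `a_i² = 0`,
and the pairs of monomials without it are recovered from their product by `splitOff`. -/
theorem typeSum_single_mul {d₁ c₁ c₀ : ℕ} {c : ℕ →₀ ℕ} (hc : ∀ d ∈ c.support, d < d₁) :
    typeSum n (Finsupp.single d₁ c₁) 0 * typeSum n c c₀ =
      ∑ t ∈ range (min c₁ c₀ + 1),
        typeSum n (c + Finsupp.single (d₁ + 1) t + Finsupp.single d₁ (c₁ - t)) (c₀ - t) := by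
  ext1
  simp only [Subalgebra.coe_mul, AddSubmonoidClass.coe_finsetSum, coe_typeSum, ← map_mul,
    sum_mul_sum, ← sum_product', map_sum]
  rw [sum_sigma', ← sum_filter_add_sum_filter_not _ fun p => ∀ i, p.1 i < 2 ∨ p.2 i < 2,
    sum_eq_zero (s := filter (fun p => ¬ _) _), add_zero]
  · refine sum_bij' (fun p _ => ⟨roleCount (d₁ + 3) (p.1 + p.2), p.1 + p.2⟩)
      (fun q _ => (splitOff (d₁ + 2) q.2, q.2 - splitOff (d₁ + 2) q.2)) ?_ ?_ ?_ ?_ ?_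
    all_goals simp only [mem_filter, mem_product, mem_sigma, mem_range, mem_rolesOfType]
    · rintro p ⟨⟨h₁, h₂⟩, hdisj⟩
      obtain ⟨ht, hσ⟩ := ((h₁.splits h₂ hc hdisj).isOfType_iff hc).mp ⟨h₁, h₂, rfl⟩
      exact ⟨by omega, hσ⟩
    · rintro ⟨t, σ⟩ ⟨ht, hσ⟩
      obtain ⟨h₁, h₂, -⟩ := hσ.isOfType_splitOff hc (by omega)
      exact ⟨⟨h₁, h₂⟩, fun i => by have := hσ.splits_splitOff hc i; omega⟩
    · rintro p ⟨⟨h₁, h₂⟩, hdisj⟩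
      rw [(h₁.splits h₂ hc hdisj).splitOff_add, add_tsub_cancel_left]
    · rintro ⟨t, σ⟩ ⟨ht, hσ⟩
      rw [splitOff_add_sub, (hσ.isOfType_splitOff hc (by omega)).2.2]
    · rintro p ⟨⟨h₁, h₂⟩, hdisj⟩
      rw [(h₁.splits h₂ hc hdisj).roleMonomial_mul]
  · intro p hp
    obtain ⟨i, h₁, h₂⟩ := by simpa using (mem_filter.mp hp).2
    exact mk_roleMonomial_mul_eq_zero i h₁ h₂

end ProductFormula

section Decomposability

variable {n : ℕ}

lemma typeSum_mul_mem_augIdealL_sq {c c' : ℕ →₀ ℕ} {c₀ c₀' : ℕ} (h : c ≠ 0 ∨ c₀ ≠ 0)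
    (h' : c' ≠ 0 ∨ c₀' ≠ 0) : typeSum n c c₀ * typeSum n c' c₀' ∈ augIdealL n ^ 2 :=
  pow_two (augIdealL n) ▸ Ideal.mul_mem_mul (typeSum_mem_augIdealL h) (typeSum_mem_augIdealL h')

/-- Induction on `c₀`: in the product formula for the top `a`-degree `d₁` of `c`, the term
`t = 0` is `typeSum n c c₀` and every other term has fewer factors `b_i`. -/
theorem typeSum_mem_augIdealL_sq_of_one_lt_card_support {c : ℕ →₀ ℕ} {c₀ : ℕ}
    (hcard : 1 < #c.support) : typeSum n c c₀ ∈ augIdealL n ^ 2 := by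
  induction c₀ using Nat.strong_induction_on generalizing c with
  | _ c₀ ih =>
  have hne : c.support.Nonempty := card_pos.mp (by omega)
  set d₁ := c.support.max' hne
  have hd₁ : c d₁ ≠ 0 := Finsupp.mem_support_iff.mp (c.support.max'_mem hne)
  have hc : ∀ d ∈ (c.erase d₁).support, d < d₁ := fun d hd => by
    rw [Finsupp.support_erase, mem_erase] at hd
    exact lt_of_le_of_ne (c.support.le_max' d hd.2) hd.1
  obtain ⟨d₀, hd₀⟩ : (c.erase d₁).support.Nonempty := by
    rw [← card_pos, Finsupp.support_erase, card_erase_of_mem (c.support.max'_mem hne)]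
    omega
  have hprod := typeSum_single_mul (n := n) (c₁ := c d₁) (c₀ := c₀) hc
  rw [sum_range_succ', Finsupp.single_zero, add_zero, Nat.sub_zero, Nat.sub_zero,
    Finsupp.erase_add_single] at hprod
  have hmul := typeSum_mul_mem_augIdealL_sq (n := n) (c₀ := 0) (c₀' := c₀)
    (.inl (Finsupp.single_ne_zero.mpr hd₁ : Finsupp.single d₁ (c d₁) ≠ 0))
    (.inl (Finsupp.support_nonempty_iff.mp ⟨d₀, hd₀⟩))
  rw [hprod] at hmul
  refine (Submodule.add_mem_iff_right _ (sum_mem fun t ht => ?_)).mp hmul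
  have ht := mem_range.mp ht
  have hd₀' := hc d₀ hd₀
  refine ih _ (by omega) (Finsupp.one_lt_card_support (a := d₀) (b := d₁ + 1) (by omega) ?_ ?_)
  · rw [add_single_add_single_apply hc, if_neg (by omega), if_neg (by omega)]
    exact Finsupp.mem_support_iff.mp hd₀
  · rw [add_single_add_single_apply hc, if_pos rfl]
    omega

/-- The product formula for `typeSum n (single d k) 0 * typeSum n 0 (m + k)`: its extreme
terms `t = k` and `t = 0` are the two sides, and all other terms are decomposable. -/
lemma typeSum_single_succ_mem_augIdealL_sq_iff {d k : ℕ} (m : ℕ) (hk : 0 < k) :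
    typeSum n (Finsupp.single (d + 1) k) m ∈ augIdealL n ^ 2 ↔
      typeSum n (Finsupp.single d k) (m + k) ∈ augIdealL n ^ 2 := by
  obtain ⟨k, rfl⟩ : ∃ k', k = k' + 1 := ⟨k - 1, by omega⟩
  have h0 : ∀ d' ∈ (0 : ℕ →₀ ℕ).support, d' < d := by simp
  have hprod := typeSum_single_mul (n := n) (c₁ := k + 1) (c₀ := m + (k + 1)) h0
  rw [min_eq_left (by omega), sum_range_succ, sum_range_succ', Nat.sub_self, Nat.add_sub_cancel,
    Finsupp.single_zero, Finsupp.single_zero, zero_add, add_zero, zero_add, Nat.sub_zero,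
    Nat.sub_zero] at hprod
  have hmul := typeSum_mul_mem_augIdealL_sq (n := n) (c₀ := 0) (c' := 0) (c₀' := m + (k + 1))
    (.inl (Finsupp.single_ne_zero.mpr (by omega) : Finsupp.single d (k + 1) ≠ 0)) (.inr (by omega))
  rw [hprod, add_assoc] at hmul
  have hpair := (Submodule.add_mem_iff_right _ (sum_mem fun t ht => ?_)).mp hmul
  · rw [zero_add] at hpair
    exact ⟨fun h => (Submodule.add_mem_iff_left _ h).mp hpair,
      fun h => (Submodule.add_mem_iff_right _ h).mp hpair⟩
  · have ht := mem_range.mp ht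
    refine typeSum_mem_augIdealL_sq_of_one_lt_card_support
      (Finsupp.one_lt_card_support (a := d + 1) (b := d) (by omega) ?_ ?_)
    · rw [add_single_add_single_apply h0, if_pos rfl]
      omega
    · rw [add_single_add_single_apply h0, if_neg (by omega), if_pos rfl]
      omega

theorem typeSum_single_mem_augIdealL_sq {k d m : ℕ} (hk : 0 < k) (h : n < k * d + k + m) :
    typeSum n (Finsupp.single d k) m ∈ augIdealL n ^ 2 := by
  induction d generalizing m with
  | zero =>
    rw [typeSum_single_eq_zero (by omega)]
    exact zero_mem _
  | succ d ih =>
    rw [Nat.mul_succ] at h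
    exact (typeSum_single_succ_mem_augIdealL_sq_iff m hk).mpr (ih (by omega))

end Decomposability

section OrbitSums

variable {n : ℕ}

lemma roleCount_zero_add_roleCount {ρ : Fin n → ℕ} {w : ℕ} (hw : w ≠ 0)
    (h : ∀ i, ρ i = 0 ∨ ρ i = w) : roleCount 0 ρ + roleCount w ρ = n := by
  rw [← roleCount_eq_add (ρ := fun _ => 0) (v := 0) hw.symm fun i => by simpa using h i]
  simp [roleCount]

lemma IsOfType.exists_perm_comp_eq {d m : ℕ} {ρ σ : Fin n → ℕ}
    (hρ : IsOfType (Finsupp.single d m) 0 ρ) (hσ : IsOfType (Finsupp.single d m) 0 σ) :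
    ∃ g : Equiv.Perm (Fin n), σ ∘ g = ρ := by
  refine exists_perm_comp_eq_of_roleCount_eq fun v => ?_
  rcases v with _ | _ | v
  · have := roleCount_zero_add_roleCount (by omega) hρ.apply_eq_zero_or_eq
    have := roleCount_zero_add_roleCount (by omega) hσ.apply_eq_zero_or_eq
    have := hρ.1 d
    have := hσ.1 d
    omega
  · exact hρ.2.trans hσ.2.symm
  · exact (hρ.1 v).trans (hσ.1 v).symm

lemma image_comp_perm_eq_rolesOfType {d m : ℕ} {ρ₀ : Fin n → ℕ}
    (hρ₀ : IsOfType (Finsupp.single d m) 0 ρ₀) :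
    image (fun g : Equiv.Perm (Fin n) => ρ₀ ∘ g.symm) univ =
      rolesOfType n (Finsupp.single d m) 0 := by
  ext ρ
  simp only [mem_image, mem_univ, true_and, mem_rolesOfType]
  constructor
  · rintro ⟨g, rfl⟩
    exact hρ₀.comp_perm g.symm
  · intro hρ
    obtain ⟨g, hg⟩ := hρ.exists_perm_comp_eq hρ₀
    exact ⟨g.symm, hg⟩

noncomputable def roleExponent (ρ : Fin n → ℕ) : (Fin n ⊕ Fin n) →₀ ℕ :=
  Finsupp.equivFunOnFinite.symm (Sum.elim (fun i => if 2 ≤ ρ i then 1 else 0)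
    (fun i => if 2 ≤ ρ i then ρ i - 2 else ρ i))

lemma roleExponent_injective : Function.Injective (roleExponent (n := n)) := by
  intro ρ σ h
  ext i
  have ha := congr($h (Sum.inl i))
  have hb := congr($h (Sum.inr i))
  simp only [roleExponent, Finsupp.coe_equivFunOnFinite_symm, Sum.elim_inl, Sum.elim_inr] at ha hb
  split_ifs at ha hb <;> omega

lemma roleMonomial_eq_monomial (ρ : Fin n → ℕ) :
    roleMonomial ρ = monomial (roleExponent ρ) 1 := by
  have factor (i : Fin n) : roleFactor i (ρ i) =
      X (Sum.inl i) ^ roleExponent ρ (Sum.inl i) * X (Sum.inr i) ^ roleExponent ρ (Sum.inr i) := by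
    simp only [roleExponent, Finsupp.coe_equivFunOnFinite_symm, Sum.elim_inl, Sum.elim_inr]
    rcases ρ i with _ | _ | d <;> simp [roleFactor]
  rw [monomial_eq, C_1, one_mul, Finsupp.prod_fintype _ _ (fun _ => pow_zero _),
    Fintype.prod_sum_type, ← prod_mul_distrib, roleMonomial]
  exact prod_congr rfl fun i _ => factor i

lemma equivMapDomain_roleExponent (g : Equiv.Perm (Fin n)) (ρ : Fin n → ℕ) :
    Finsupp.equivMapDomain (Equiv.sumCongr g g) (roleExponent ρ) = roleExponent (ρ ∘ g.symm) := by
  ext (i | i) <;> simp [roleExponent]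

def headRoles (n k e : ℕ) : Fin n → ℕ :=
  fun i => if (i : ℕ) < k then e + 2 else 0

lemma roleExponent_headRoles (k e : ℕ) : roleExponent (headRoles n k e) = headMonomial n k e := by
  ext (i | i) <;>
    simp only [roleExponent, headRoles, headMonomial, Finsupp.coe_equivFunOnFinite_symm,
      Sum.elim_inl, Sum.elim_inr] <;>
    split_ifs <;> omega

lemma isOfType_headRoles {k : ℕ} (e : ℕ) (hkn : k ≤ n) :
    IsOfType (Finsupp.single e k) 0 (headRoles n k e) := by
  refine ⟨fun d => ?_, roleCount_eq_zero fun i => by simp only [headRoles]; split_ifs <;> omega⟩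
  rw [Finsupp.single_apply]
  split_ifs with hd
  · subst hd
    rw [roleCount_eq_card (p := fun i : Fin n => (i : ℕ) < k) fun i => by simp [headRoles],
      Fin.card_filter_val_lt, min_eq_right hkn]
  · exact roleCount_eq_zero fun i => by simp only [headRoles]; split_ifs <;> omega

theorem orbitSum_headMonomial {k : ℕ} (e : ℕ) (hkn : k ≤ n) :
    orbitSum n (headMonomial n k e) = typeSum n (Finsupp.single e k) 0 := by
  have horbit : image (fun g : Equiv.Perm (Fin n) =>
      Finsupp.equivMapDomain (Equiv.sumCongr g g) (headMonomial n k e)) univ =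
        image roleExponent (rolesOfType n (Finsupp.single e k) 0) := by
    simp only [← roleExponent_headRoles, equivMapDomain_roleExponent,
      ← image_comp_perm_eq_rolesOfType (isOfType_headRoles e hkn), image_image]
    rfl
  rw [orbitSum, coe_typeSum, horbit, sum_image fun _ _ _ _ h => roleExponent_injective h]
  simp only [roleMonomial_eq_monomial]

end OrbitSums

/-- if `ke + k > n` (i.e. `e > n/k - 1`), then the orbit sum
`[a_1⋯a_k b_1^e⋯b_k^e]` is decomposable in `L_n`, i.e. it lies in the square of the
augmentation ideal. -/
theorem stmt15 (n k e : ℕ) (hkn : k ≤ n) (h : n < k * e + k) :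
    ∃ y : Ln n, y ∈ (augIdealL n) ^ 2 ∧ (y : Kn n) = orbitSum n (headMonomial n k e) := by
  have hk : 0 < k := Nat.pos_of_ne_zero (by rintro rfl; simp at h)
  exact ⟨typeSum n (Finsupp.single e k) 0, typeSum_single_mem_augIdealL_sq (m := 0) hk (by omega),
    (orbitSum_headMonomial e hkn).symm⟩
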